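/- Let d ≥ 2 be an integer and ω = e^{2πi/(d+1)}. Define e⁺_{k,n} as the k-th elementary symmetric polynomial evaluated at the first n terms of the sequence (ω, ω^{−1}, ω², ω^{−2}, ω³, …) (term 2j−1 is ω^{j}, term 2j is ω^{−j}), and e⁻_{k,n} as the k-th elementary symmetric polynomial evaluated at the first n terms of (ω^{−1}, ω, ω^{−2}, ω², …) (term 2j−1 is ω^{−j}, term 2j is ω^{j}), with the conventions e^±_{0,n} = 1 and e^±_{k,n} = 0 for k < 0 or k > n. Let R⁺ and R⁻ be the d×d matrices with entries, for 1 ≤ j, k ≤ d: (R⁺)_{j,k} = (−1)^{1+⌊j/2⌋+⌈k/2⌉}·e⁺_{⌊k/2⌋+(j−1)/2, k−1} if j is odd and (−1)^{1+⌊j/2⌋+⌈k/2⌉}·e⁺_{⌊k/2⌋−j/2, k−1} if j is even; (R⁻)_{j,k} = (−1)^{⌊j/2⌋+⌊k/2⌋}·e⁻_{⌊k/2⌋+(j−1)/2, k−1} if j is odd and (−1)^{⌊j/2⌋+⌊k/2⌋}·e⁻_{⌊k/2⌋−j/2, k−1} if j is even. Let A₃ = diag(1, σ₁, …, σ₁,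 0) − ∑_{j=1}^{d} E_{j,d} if d is even and A₃ = diag(1, σ₁, …, σ₁) if d is odd, and A₂ = diag(σ₁, …, σ₁) if d is even and A₂ = diag(σ₁, …, σ₁, 0) − ∑_{j=1}^{d} E_{j,d} if d is odd. Then: A₃ · R⁺ = R⁻ · ( I − ∑_{j=1}^{⌊(d−1)/2⌋} E_{2j+1,2j} ) and A₂ · R⁻ = R⁺ · ( Λ′ − ∑_{j=1}^{⌊d/2⌋} E_{2j,2j−1} ), where Λ′ is the diagonal matrix with Λ′_{2j−1,2j−1} = ω^{j} and Λ′_{2j,2j} = ω^{−j}. -/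

import Mathlib

open Matrix

/-- `ω = e^{2πi/(d+1)}`. -/
noncomputable def omC (d : ℕ) : ℂ := Complex.exp (2 * Real.pi * Complex.I / ((d : ℂ) + 1))

/-- The sequence `(ω, ω^{-1}, ω², ω^{-2}, ω³, …)`: term `2j-1` is `ω^j`, term `2j` is
`ω^{-j}` (1-based argument). -/
noncomputable def sp (d : ℕ) (m : ℕ) : ℂ :=
  if m % 2 = 1 then omC d ^ ((m + 1) / 2) else (omC d ^ (m / 2))⁻¹

/-- The sequence `(ω^{-1}, ω, ω^{-2}, ω², …)`: term `2j-1` is `ω^{-j}`, term `2j` is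
`ω^{j}`. -/
noncomputable def sm (d : ℕ) (m : ℕ) : ℂ :=
  if m % 2 = 1 then (omC d ^ ((m + 1) / 2))⁻¹ else omC d ^ (m / 2)

/-- `k`-th elementary symmetric polynomial in the first `n` terms of the sequence `f`,
with the conventions that it is `1` for `k = 0` and `0` for `k < 0` or `k > n`. -/
noncomputable def esymZ (f : ℕ → ℂ) (n : ℕ) (k : ℤ) : ℂ :=
  if 0 ≤ k then ∑ A ∈ Finset.powersetCard k.toNat (Finset.Icc 1 n), ∏ i ∈ A, f i else 0

/-- The matrix `R⁺` (0-based Lean indices `i`, `j` correspond to 1-based paper indices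
`J = i+1`, `K = j+1`). -/
noncomputable def Rp (d : ℕ) : Matrix (Fin d) (Fin d) ℂ :=
  Matrix.of fun i j =>
    (-1 : ℂ) ^ (1 + ((i : ℕ) + 1) / 2 + ((j : ℕ) + 2) / 2) *
      (if (i : ℕ) % 2 = 0 then
        esymZ (sp d) (j : ℕ) (((((j : ℕ) + 1) / 2 : ℕ) : ℤ) + (((i : ℕ) / 2 : ℕ) : ℤ))
      else
        esymZ (sp d) (j : ℕ) (((((j : ℕ) + 1) / 2 : ℕ) : ℤ) - ((((i : ℕ) + 1) / 2 : ℕ) : ℤ)))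

/-- The matrix `R⁻`. -/
noncomputable def Rm (d : ℕ) : Matrix (Fin d) (Fin d) ℂ :=
  Matrix.of fun i j =>
    (-1 : ℂ) ^ (((i : ℕ) + 1) / 2 + ((j : ℕ) + 1) / 2) *
      (if (i : ℕ) % 2 = 0 then
        esymZ (sm d) (j : ℕ) (((((j : ℕ) + 1) / 2 : ℕ) : ℤ) + (((i : ℕ) / 2 : ℕ) : ℤ))
      else
        esymZ (sm d) (j : ℕ) (((((j : ℕ) + 1) / 2 : ℕ) : ℤ) - ((((i : ℕ) + 1) / 2 : ℕ) : ℤ)))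

/-- `A₃ = diag(1, σ₁, …, σ₁, 0) - ∑_{j=1}^d E_{j,d}` if `d` is even,
`A₃ = diag(1, σ₁, …, σ₁)` if `d` is odd. -/
noncomputable def A3 (d : ℕ) : Matrix (Fin d) (Fin d) ℂ :=
  Matrix.of fun i j =>
    (if (i : ℕ) = 0 ∧ (j : ℕ) = 0 then (1 : ℂ)
      else if (i : ℕ) % 2 = 1 ∧ (j : ℕ) = (i : ℕ) + 1 then 1
      else if (j : ℕ) % 2 = 1 ∧ (i : ℕ) = (j : ℕ) + 1 then 1
      else 0)
    - (if d % 2 = 0 ∧ (j : ℕ) = d - 1 then 1 else 0)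

/-- `A₂ = diag(σ₁, …, σ₁)` if `d` is even,
`A₂ = diag(σ₁, …, σ₁, 0) - ∑_{j=1}^d E_{j,d}` if `d` is odd. -/
noncomputable def A2 (d : ℕ) : Matrix (Fin d) (Fin d) ℂ :=
  Matrix.of fun i j =>
    (if (i : ℕ) % 2 = 0 ∧ (j : ℕ) = (i : ℕ) + 1 then (1 : ℂ)
      else if (j : ℕ) % 2 = 0 ∧ (i : ℕ) = (j : ℕ) + 1 then 1
      else 0)
    - (if d % 2 = 1 ∧ (j : ℕ) = d - 1 then 1 else 0)

/-- `G₁ = I - ∑_{j=1}^{⌊(d-1)/2⌋} E_{2j+1,2j}`. -/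
noncomputable def G1 (d : ℕ) : Matrix (Fin d) (Fin d) ℂ :=
  Matrix.of fun i j =>
    (if i = j then (1 : ℂ) else 0) -
      (if (i : ℕ) % 2 = 0 ∧ (i : ℕ) = (j : ℕ) + 1 then 1 else 0)

/-- `G₂ = Λ' - ∑_{j=1}^{⌊d/2⌋} E_{2j,2j-1}`, where `Λ'` is diagonal with
`Λ'_{2j-1,2j-1} = ω^j` and `Λ'_{2j,2j} = ω^{-j}`. -/
noncomputable def G2 (d : ℕ) : Matrix (Fin d) (Fin d) ℂ :=
  Matrix.of fun i j =>
    (if i = j then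
        (if (i : ℕ) % 2 = 0 then omC d ^ ((i : ℕ) / 2 + 1)
          else (omC d ^ (((i : ℕ) + 1) / 2))⁻¹)
      else 0) -
      (if (i : ℕ) % 2 = 1 ∧ (i : ℕ) = (j : ℕ) + 1 then 1 else 0)

/-!
Write `E n r` and `F n r` for `esymZ (sp d) n r` and `esymZ (sm d) n r`. Up to sign, the entry
`(i, k)` of `R⁺` (resp. `R⁻`) is `E k r` (resp. `F k r`) with `r = ⌈k/2⌉ + rowShift i`, where
`rowShift i` is `i/2` for even `i` and `-⌈i/2⌉` for odd `i`; the row permutations in `A₃` and `A₂`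
act on `rowShift` by `s ↦ -s` and `s ↦ -1 - s`. Since `sp m * sm m = 1`, taking complements
gives the reflection `E n (n - r) = (∏_{m ≤ n} sp m) * F n r`, where the product is `1` for even
`n` and `ω^((n+1)/2)` for odd `n`. Together with the Pascal rule
`E (n+1) r = E n r + sp (n+1) * E n (r-1)` this gives both identities column by column.
Both `R^±` are upper triangular, so the corrections `-∑ E_{j,d}` in `A₃`, `A₂` and the truncation
of `G₁`, `G₂` only matter in the last column, where one needs `E d r = (-1)^r`: the numbers
`sp 1, …, sp d` are the nontrivial `(d+1)`-st roots of unity, so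
`∏ (X - sp m) = 1 + X + ⋯ + X^d`.
-/

open Finset Polynomial

theorem Multiset.esymm_cons_succ {R : Type*} [CommSemiring R] (a : R) (s : Multiset R) (k : ℕ) :
    (a ::ₘ s).esymm (k + 1) = s.esymm (k + 1) + a * s.esymm k := by
  simp [Multiset.esymm, Multiset.powersetCard_cons, Multiset.map_map, Multiset.sum_map_mul_left]

section esymZ

variable (f : ℕ → ℂ) (n : ℕ)

theorem esymZ_of_neg {k : ℤ} (hk : k < 0) : esymZ f n k = 0 :=
  if_neg hk.not_ge

theorem esymZ_of_lt {k : ℤ} (hk : (n : ℤ) < k) : esymZ f n k = 0 := by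
  rw [esymZ, if_pos (by omega), powersetCard_eq_empty.2 (by simp; omega), sum_empty]

theorem esymZ_zero : esymZ f n 0 = 1 := by
  simp [esymZ]

theorem esymZ_eq_esymm {k : ℤ} (hk : 0 ≤ k) :
    esymZ f n k = ((Icc 1 n).val.map f).esymm k.toNat := by
  rw [esymZ, if_pos hk, Finset.esymm_map_val]

theorem esymZ_succ (k : ℤ) :
    esymZ f (n + 1) k = esymZ f n k + f (n + 1) * esymZ f n (k - 1) := by
  rcases lt_trichotomy k 0 with hk | rfl | hk
  · rw [esymZ_of_neg _ _ hk, esymZ_of_neg _ _ hk, esymZ_of_neg _ _ (by omega), mul_zero, add_zero]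
  · rw [esymZ_zero, esymZ_zero, esymZ_of_neg _ _ (by omega), mul_zero, add_zero]
  have hIcc : Icc 1 (n + 1) = insert (n + 1) (Icc 1 n) := by
    ext; simp; omega
  rw [esymZ_eq_esymm _ _ hk.le, esymZ_eq_esymm _ _ hk.le, esymZ_eq_esymm _ _ (by omega), hIcc,
    insert_val_of_notMem (by simp), Multiset.map_cons,
    show k.toNat = (k - 1).toNat + 1 by omega, Multiset.esymm_cons_succ]

theorem esymZ_sub_eq_prod_mul (g : ℕ → ℂ) (hfg : ∀ m, f m * g m = 1) (r : ℤ) :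
    esymZ f n (n - r) = (∏ m ∈ Icc 1 n, f m) * esymZ g n r := by
  rcases lt_or_ge r 0 with hr | hr
  · rw [esymZ_of_neg g n hr, esymZ_of_lt f n (by omega), mul_zero]
  rcases lt_or_ge (n : ℤ) r with hrn | hrn
  · rw [esymZ_of_lt g n hrn, esymZ_of_neg f n (by omega), mul_zero]
  rw [esymZ, if_pos (by omega), esymZ, if_pos hr, mul_sum]
  have hcard : #(Icc 1 n) = n := by simp
  refine sum_nbij' (Icc 1 n \ ·) (Icc 1 n \ ·) ?_ ?_ ?_ ?_ ?_
  · intro A hA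
    rw [mem_powersetCard] at hA ⊢
    exact ⟨sdiff_subset, by rw [card_sdiff_of_subset hA.1, hcard, hA.2]; omega⟩
  · intro B hB
    rw [mem_powersetCard] at hB ⊢
    exact ⟨sdiff_subset, by rw [card_sdiff_of_subset hB.1, hcard, hB.2]; omega⟩
  · intro A hA
    exact Finset.sdiff_sdiff_eq_self (mem_powersetCard.1 hA).1
  · intro B hB
    exact Finset.sdiff_sdiff_eq_self (mem_powersetCard.1 hB).1
  · intro A hA
    have hprod : (∏ m ∈ Icc 1 n \ A, f m) * ∏ m ∈ Icc 1 n \ A, g m = 1 := by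
      rw [← prod_mul_distrib]; exact prod_eq_one fun m _ => hfg m
    rw [← prod_sdiff (mem_powersetCard.1 hA).1]
    linear_combination -(∏ m ∈ A, f m) * hprod

end esymZ

section RootsOfUnity

theorem IsPrimitiveRoot.prod_X_sub_C_pow_succ {R : Type*} [CommRing R] [IsDomain R] {ζ : R}
    {d : ℕ} (hζ : IsPrimitiveRoot ζ (d + 1)) :
    ∏ i ∈ range d, (X - C (ζ ^ (i + 1))) = ∑ i ∈ range (d + 1), (X : R[X]) ^ i := by
  apply mul_right_cancel₀ (X_sub_C_ne_zero (1 : R))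
  have h := X_pow_sub_C_eq_prod hζ d.succ_pos (one_pow (d + 1))
  rw [prod_range_succ'] at h
  simpa [geom_sum_mul] using h.symm

variable (d : ℕ)

theorem omC_isPrimitiveRoot : IsPrimitiveRoot (omC d) (d + 1) := by
  simpa [omC] using Complex.isPrimitiveRoot_exp (d + 1) d.succ_ne_zero

theorem omC_ne_zero : omC d ≠ 0 := Complex.exp_ne_zero _

theorem sp_mul_sm (m : ℕ) : sp d m * sm d m = 1 := by
  unfold sp sm
  split_ifs
  · exact mul_inv_cancel₀ (pow_ne_zero _ (omC_ne_zero d))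
  · exact inv_mul_cancel₀ (pow_ne_zero _ (omC_ne_zero d))

theorem sp_eq_omC_pow {m : ℕ} (hm : m ∈ Icc 1 d) :
    sp d m = omC d ^ (if m % 2 = 1 then (m + 1) / 2 else d + 1 - m / 2) := by
  rw [mem_Icc] at hm
  unfold sp
  split_ifs
  · rfl
  · refine inv_eq_of_mul_eq_one_right ?_
    rw [← pow_add, show m / 2 + (d + 1 - m / 2) = d + 1 by omega,
      (omC_isPrimitiveRoot d).pow_eq_one]

theorem prod_X_sub_C_sp : ∏ m ∈ Icc 1 d, (X - C (sp d m)) = ∑ i ∈ range (d + 1), X ^ i := by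
  rw [← (omC_isPrimitiveRoot d).prod_X_sub_C_pow_succ]
  refine prod_nbij' (fun m => (if m % 2 = 1 then (m + 1) / 2 else d + 1 - m / 2) - 1)
    (fun i => if i + 1 ≤ (d + 1) / 2 then 2 * i + 1 else 2 * (d - i)) ?_ ?_ ?_ ?_
    (fun m hm => by
      rw [sp_eq_omC_pow d hm]
      rw [mem_Icc] at hm
      congr 3
      split_ifs <;> omega)
  all_goals intro a ha; simp only [mem_Icc, mem_range] at *; split_ifs <;> omega

theorem esymZ_sp_self {r : ℤ} (h0 : 0 ≤ r) (hr : r ≤ d) : esymZ (sp d) d r = (-1) ^ r := by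
  lift r to ℕ using h0
  have h := congrArg (coeff · (d - r)) (prod_X_sub_C_sp d)
  simp only [sub_eq_add_neg, ← map_neg] at h
  rw [Finset.prod_X_add_C_coeff _ _ (by simp), Nat.card_Icc,
    show d + 1 - 1 - (d - r) = r by omega, finsetSum_coeff] at h
  simp only [coeff_X_pow, sum_ite_eq, mem_range, show d - r < d + 1 by omega, if_true] at h
  have hsum : ∑ t ∈ powersetCard r (Icc 1 d), ∏ i ∈ t, -sp d i = (-1) ^ r * esymZ (sp d) d r := by
    rw [esymZ, if_pos (by omega), mul_sum, Int.toNat_natCast]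
    exact sum_congr rfl fun t ht => by rw [prod_neg, (mem_powersetCard.1 ht).2]
  have hsq : ((-1 : ℂ) ^ r) ^ 2 = 1 := by rw [← pow_mul, pow_mul']; simp
  rw [zpow_natCast]
  linear_combination (-1) ^ r * hsum.symm.trans h - esymZ (sp d) d r * hsq

end RootsOfUnity

theorem neg_one_zpow_eq_of_emod_two_eq {α : Type*} [DivisionMonoid α] [HasDistribNeg α] {a b : ℤ}
    (h : a % 2 = b % 2) : (-1 : α) ^ a = (-1) ^ b := by
  simp only [neg_one_zpow_eq_ite, Int.even_iff, h]

section Reflection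

variable (d : ℕ)

theorem sp_two_mul_add_one (b : ℕ) : sp d (2 * b + 1) = omC d ^ (b + 1) := by
  rw [sp, if_pos (by omega), show (2 * b + 1 + 1) / 2 = b + 1 by omega]

theorem sp_two_mul_add_two (b : ℕ) : sp d (2 * b + 2) = (omC d ^ (b + 1))⁻¹ := by
  rw [sp, if_neg (by omega), show (2 * b + 2) / 2 = b + 1 by omega]

theorem sm_two_mul_add_two (b : ℕ) : sm d (2 * b + 2) = omC d ^ (b + 1) := by
  rw [sm, if_neg (by omega), show (2 * b + 2) / 2 = b + 1 by omega]

theorem prod_sp_two_mul (b : ℕ) : ∏ m ∈ Icc 1 (2 * b), sp d m = 1 := by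
  induction b with
  | zero => simp
  | succ b ih =>
    rw [show 2 * (b + 1) = 2 * b + 1 + 1 by ring, prod_Icc_succ_top (by omega),
      prod_Icc_succ_top (by omega), ih, sp_two_mul_add_one, sp_two_mul_add_two, one_mul,
      mul_inv_cancel₀ (pow_ne_zero _ (omC_ne_zero d))]

theorem prod_sp_two_mul_add_one (b : ℕ) : ∏ m ∈ Icc 1 (2 * b + 1), sp d m = omC d ^ (b + 1) := by
  rw [prod_Icc_succ_top (by omega), prod_sp_two_mul, one_mul, sp_two_mul_add_one]

theorem esymZ_sm_two_mul (b : ℕ) (r : ℤ) :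
    esymZ (sm d) (2 * b) r = esymZ (sp d) (2 * b) (2 * b - r) := by
  have h := esymZ_sub_eq_prod_mul (sp d) (2 * b) (sm d) (sp_mul_sm d) r
  push_cast at h
  rw [h, prod_sp_two_mul, one_mul]

theorem esymZ_sp_two_mul_add_one_sub (b : ℕ) (r : ℤ) :
    esymZ (sp d) (2 * b + 1) (2 * b + 1 - r) = omC d ^ (b + 1) * esymZ (sm d) (2 * b + 1) r := by
  have h := esymZ_sub_eq_prod_mul (sp d) (2 * b + 1) (sm d) (sp_mul_sm d) r
  push_cast at h
  rw [h, prod_sp_two_mul_add_one]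

end Reflection

section SignedEsymm

variable (d : ℕ)

noncomputable def ePlus (n : ℕ) (r : ℤ) : ℂ := (-1) ^ ((n : ℤ) + r) * esymZ (sp d) n r

noncomputable def eMinus (n : ℕ) (r : ℤ) : ℂ := (-1) ^ r * esymZ (sm d) n r

theorem ePlus_zero (n : ℕ) : ePlus d n 0 = (-1) ^ n := by
  simp [ePlus, esymZ_zero]

theorem ePlus_self {r : ℤ} (h0 : 0 ≤ r) (hr : r ≤ d) : ePlus d d r = (-1) ^ d := by
  rw [ePlus, esymZ_sp_self d h0 hr, ← zpow_add₀ (by norm_num), ← zpow_natCast]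
  exact neg_one_zpow_eq_of_emod_two_eq (by omega)

theorem ePlus_two_mul_sub (b : ℕ) (r : ℤ) : ePlus d (2 * b) (2 * b - r) = eMinus d (2 * b) r := by
  rw [ePlus, eMinus, esymZ_sm_two_mul]
  push_cast
  rw [neg_one_zpow_eq_of_emod_two_eq (b := r) (by omega)]

theorem eMinus_two_mul_add_one_sub_eMinus (b : ℕ) (r : ℤ) :
    eMinus d (2 * b + 1) r - eMinus d (2 * b + 2) r = ePlus d (2 * b + 1) (2 * b + 2 - r) := by
  have hpascal := esymZ_succ (sm d) (2 * b + 1) r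
  have hrefl := esymZ_sp_two_mul_add_one_sub d b (r - 1)
  rw [sm_two_mul_add_two, ← hrefl] at hpascal
  rw [ePlus, eMinus, eMinus, hpascal]
  push_cast
  rw [neg_one_zpow_eq_of_emod_two_eq (a := 2 * b + 1 + (2 * b + 2 - r)) (b := r + 1) (by omega),
    zpow_add_one₀ (by norm_num), show (2 * b + 1 : ℤ) - (r - 1) = 2 * b + 2 - r by ring]
  ring

theorem eMinus_two_mul_add_one_sub (b : ℕ) (r : ℤ) :
    eMinus d (2 * b + 1) (2 * b + 1 - r) = ePlus d (2 * b + 1) r * sp d (2 * b + 2) := by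
  have hrefl := esymZ_sp_two_mul_add_one_sub d b (2 * b + 1 - r)
  rw [sub_sub_cancel] at hrefl
  rw [ePlus, eMinus, hrefl, sp_two_mul_add_two]
  push_cast
  rw [neg_one_zpow_eq_of_emod_two_eq (a := 2 * b + 1 - r) (b := 2 * b + 1 + r) (by omega)]
  field_simp [omC_ne_zero d]

theorem eMinus_two_mul_sub (b : ℕ) (r : ℤ) :
    eMinus d (2 * b) (2 * b - r) =
      ePlus d (2 * b) (r - 1) * sp d (2 * b + 1) - ePlus d (2 * b + 1) r := by
  rw [ePlus, ePlus, eMinus, esymZ_sm_two_mul, sub_sub_cancel, esymZ_succ (sp d) (2 * b) r]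
  push_cast
  rw [neg_one_zpow_eq_of_emod_two_eq (a := 2 * b - r) (b := r) (by omega),
    neg_one_zpow_eq_of_emod_two_eq (a := 2 * b + (r - 1)) (b := r + 1) (by omega),
    neg_one_zpow_eq_of_emod_two_eq (a := 2 * b + 1 + r) (b := r + 1) (by omega),
    zpow_add_one₀ (by norm_num)]
  ring

end SignedEsymm

section Entries

def pairSwap (i : ℕ) : ℕ := if i % 2 = 0 then i + 1 else i - 1

def shiftedPairSwap (i : ℕ) : ℕ := if i = 0 then 0 else pairSwap (i - 1) + 1

def rowShift (i : ℕ) : ℤ := if i % 2 = 0 then ((i / 2 : ℕ) : ℤ) else -(((i + 1) / 2 : ℕ) : ℤ)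

theorem rowShift_pairSwap (i : ℕ) : rowShift (pairSwap i) = -1 - rowShift i := by
  unfold rowShift pairSwap
  split_ifs <;> omega

theorem rowShift_shiftedPairSwap (i : ℕ) : rowShift (shiftedPairSwap i) = -rowShift i := by
  unfold rowShift shiftedPairSwap pairSwap
  split_ifs <;> omega

variable (d : ℕ)

noncomputable def rPlus (i k : ℕ) : ℂ := ePlus d k (((k + 1) / 2 : ℕ) + rowShift i)

noncomputable def rMinus (i k : ℕ) : ℂ := eMinus d k (((k + 1) / 2 : ℕ) + rowShift i)

theorem Rp_apply (i k : Fin d) : Rp d i k = rPlus d i k := by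
  have hk := Nat.mod_two_eq_zero_or_one k
  simp only [Rp, of_apply, rPlus, ePlus, rowShift]
  split_ifs <;> rw [← zpow_natCast] <;> congr 1 <;>
    exact neg_one_zpow_eq_of_emod_two_eq (by push_cast; omega)

theorem Rm_apply (i k : Fin d) : Rm d i k = rMinus d i k := by
  simp only [Rm, of_apply, rMinus, eMinus, rowShift]
  split_ifs <;> rw [← zpow_natCast] <;> congr 1 <;>
    exact neg_one_zpow_eq_of_emod_two_eq (by push_cast; omega)

theorem rPlus_shiftedPairSwap (i k : ℕ) :
    rPlus d (shiftedPairSwap i) k = rMinus d i k - if k % 2 = 1 then rMinus d i (k + 1) else 0 := by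
  simp only [rPlus, rMinus, rowShift_shiftedPairSwap]
  obtain ⟨b, rfl | rfl⟩ : ∃ b, k = 2 * b ∨ k = 2 * b + 1 := ⟨k / 2, by omega⟩
  · rw [if_neg (by omega), sub_zero]
    convert ePlus_two_mul_sub d b (b + rowShift i) using 2 <;> omega
  · rw [if_pos (by omega)]
    convert (eMinus_two_mul_add_one_sub_eMinus d b (b + 1 + rowShift i)).symm using 3 <;> omega

theorem rMinus_pairSwap (i k : ℕ) :
    rMinus d (pairSwap i) k =
      rPlus d i k * sp d (k + 1) - if k % 2 = 0 then rPlus d i (k + 1) else 0 := by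
  simp only [rPlus, rMinus, rowShift_pairSwap]
  obtain ⟨b, rfl | rfl⟩ : ∃ b, k = 2 * b ∨ k = 2 * b + 1 := ⟨k / 2, by omega⟩
  · rw [if_pos (show 2 * b % 2 = 0 by omega)]
    convert eMinus_two_mul_sub d b (b + 1 + rowShift i) using 4 <;> omega
  · rw [if_neg (by omega), sub_zero]
    convert eMinus_two_mul_add_one_sub d b (b + 1 + rowShift i) using 3 <;> omega

theorem rPlus_eq_zero_of_lt {i k : ℕ} (h : k < i) : rPlus d i k = 0 := by
  rw [rPlus, ePlus, rowShift]
  split_ifs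
  · rw [esymZ_of_lt _ _ (by omega), mul_zero]
  · rw [esymZ_of_neg _ _ (by omega), mul_zero]

theorem rMinus_eq_zero_of_lt {i k : ℕ} (h : k < i) : rMinus d i k = 0 := by
  rw [rMinus, eMinus, rowShift]
  split_ifs
  · rw [esymZ_of_lt _ _ (by omega), mul_zero]
  · rw [esymZ_of_neg _ _ (by omega), mul_zero]

theorem rPlus_self_of_odd {k : ℕ} (hk : k % 2 = 1) : rPlus d k k = -1 := by
  rw [rPlus, rowShift, if_neg (by omega), add_neg_cancel, ePlus_zero,
    (Nat.odd_iff.2 hk).neg_one_pow]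

theorem rMinus_self_of_even {k : ℕ} (hk : k % 2 = 0) : rMinus d k k = 1 := by
  obtain ⟨b, rfl⟩ : ∃ b, k = 2 * b := ⟨k / 2, by omega⟩
  have h := ePlus_two_mul_sub d b (2 * b)
  rw [sub_self, ePlus_zero, pow_mul, neg_one_sq, one_pow] at h
  rw [rMinus, rowShift, if_pos hk, show (((2 * b + 1) / 2 : ℕ) : ℤ) + ((2 * b / 2 : ℕ) : ℤ) =
    2 * b by omega, ← h]

theorem half_add_rowShift_mem_Icc {i k : ℕ} (h : i ≤ k) :
    (((k + 1) / 2 : ℕ) : ℤ) + rowShift i ∈ Set.Icc 0 (k : ℤ) := by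
  rw [rowShift, Set.mem_Icc]
  split_ifs <;> omega

theorem rPlus_col_self (hd : d % 2 = 1) {i : ℕ} (hi : i < d) : rPlus d i d = -1 := by
  have hr := half_add_rowShift_mem_Icc hi.le
  rw [rPlus, ePlus_self d hr.1 hr.2, (Nat.odd_iff.2 hd).neg_one_pow]

theorem rMinus_col_self (hd : d % 2 = 0) {i : ℕ} (hi : i < d) : rMinus d i d = 1 := by
  obtain ⟨b, rfl⟩ : ∃ b, d = 2 * b := ⟨d / 2, by omega⟩
  obtain ⟨h0, hr⟩ := half_add_rowShift_mem_Icc hi.le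
  rw [rMinus, ← ePlus_two_mul_sub, ePlus_self _ (by omega) (by omega), pow_mul, neg_one_sq,
    one_pow]

end Entries

section Products

variable (d : ℕ)

theorem sum_fin_ite_eq (T : ℕ) (v : ℕ → ℂ) :
    ∑ j : Fin d, (if (j : ℕ) = T then v j else 0) = if T < d then v T else 0 := by
  rw [Fin.sum_univ_eq_sum_range (fun j => if j = T then v j else 0), sum_ite_eq']
  simp only [mem_range]

theorem sum_fin_ite_and_eq (p : Prop) [Decidable p] (T : ℕ) (v : ℕ → ℂ) :
    ∑ j : Fin d, (if p ∧ (j : ℕ) = T then v j else 0) = if p ∧ T < d then v T else 0 := by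
  by_cases hp : p <;> simp [hp, sum_fin_ite_eq]

theorem A3_apply (i j : Fin d) :
    A3 d i j = (if (j : ℕ) = shiftedPairSwap i then 1 else 0) -
      if d % 2 = 0 ∧ (j : ℕ) = d - 1 then 1 else 0 := by
  simp only [A3, of_apply, shiftedPairSwap, pairSwap]
  congr 1
  split_ifs <;> first | rfl | omega

theorem A2_apply (i j : Fin d) :
    A2 d i j = (if (j : ℕ) = pairSwap i then 1 else 0) -
      if d % 2 = 1 ∧ (j : ℕ) = d - 1 then 1 else 0 := by
  simp only [A2, of_apply, pairSwap]
  congr 1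
  split_ifs <;> first | rfl | omega

theorem G1_apply (j k : Fin d) :
    G1 d j k = (if (j : ℕ) = k then 1 else 0) -
      if (k : ℕ) % 2 = 1 ∧ (j : ℕ) = k + 1 then 1 else 0 := by
  simp only [G1, of_apply, Fin.ext_iff]
  congr 1
  split_ifs <;> first | rfl | omega

theorem G2_apply (j k : Fin d) :
    G2 d j k = (if (j : ℕ) = k then sp d (k + 1) else 0) -
      if (k : ℕ) % 2 = 0 ∧ (j : ℕ) = k + 1 then 1 else 0 := by
  simp only [G2, of_apply, Fin.ext_iff]
  congr 1
  · split_ifs with h <;> simp only [sp, h] <;> split_ifs <;> first | rfl | omega | (congr 1; omega)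
  · split_ifs <;> first | rfl | omega

theorem A3_mul_Rp_apply (i k : Fin d) :
    (A3 d * Rp d) i k =
      rPlus d (shiftedPairSwap i) k - if d % 2 = 0 then rPlus d (d - 1) k else 0 := by
  simp only [mul_apply, A3_apply, Rp_apply, sub_mul, ite_mul, one_mul, zero_mul, sum_sub_distrib]
  rw [sum_fin_ite_eq d _ (fun j => rPlus d j k), sum_fin_ite_and_eq d _ _ (fun j => rPlus d j k)]
  congr 1
  · split_ifs with h
    · rfl
    · exact (rPlus_eq_zero_of_lt d (by omega)).symm
  · simp only [show d - 1 < d by have := i.isLt; omega, and_true]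

theorem A2_mul_Rm_apply (i k : Fin d) :
    (A2 d * Rm d) i k =
      rMinus d (pairSwap i) k - if d % 2 = 1 then rMinus d (d - 1) k else 0 := by
  simp only [mul_apply, A2_apply, Rm_apply, sub_mul, ite_mul, one_mul, zero_mul, sum_sub_distrib]
  rw [sum_fin_ite_eq d _ (fun j => rMinus d j k), sum_fin_ite_and_eq d _ _ (fun j => rMinus d j k)]
  congr 1
  · split_ifs with h
    · rfl
    · exact (rMinus_eq_zero_of_lt d (by omega)).symm
  · simp only [show d - 1 < d by have := i.isLt; omega, and_true]

theorem Rm_mul_G1_apply (i k : Fin d) :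
    (Rm d * G1 d) i k =
      rMinus d i k - if (k : ℕ) % 2 = 1 ∧ (k : ℕ) + 1 < d then rMinus d i (k + 1) else 0 := by
  simp only [mul_apply, G1_apply, Rm_apply, mul_sub, mul_ite, mul_one, mul_zero, sum_sub_distrib]
  rw [sum_fin_ite_eq d _ (fun j => rMinus d i j), sum_fin_ite_and_eq d _ _ (fun j => rMinus d i j),
    if_pos k.isLt]

theorem Rp_mul_G2_apply (i k : Fin d) :
    (Rp d * G2 d) i k = rPlus d i k * sp d (k + 1) -
      if (k : ℕ) % 2 = 0 ∧ (k : ℕ) + 1 < d then rPlus d i (k + 1) else 0 := by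
  simp only [mul_apply, G2_apply, Rp_apply, mul_sub, mul_ite, mul_one, mul_zero, sum_sub_distrib]
  rw [sum_fin_ite_eq d _ (fun j => rPlus d i j * sp d (k + 1)),
    sum_fin_ite_and_eq d _ _ (fun j => rPlus d i j), if_pos k.isLt]

theorem A3_mul_Rp : A3 d * Rp d = Rm d * G1 d := by
  ext i k
  rw [A3_mul_Rp_apply, Rm_mul_G1_apply, rPlus_shiftedPairSwap]
  obtain hk | hk : (k : ℕ) + 1 < d ∨ (k : ℕ) + 1 = d := by omega
  · rw [rPlus_eq_zero_of_lt d (show (k : ℕ) < d - 1 by omega)]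
    simp [hk]
  · by_cases hkodd : (k : ℕ) % 2 = 1
    · rw [if_pos hkodd, if_pos (by omega), if_neg (by omega), show d - 1 = (k : ℕ) by omega,
        hk, rMinus_col_self d (by omega) i.isLt, rPlus_self_of_odd d hkodd]
      ring
    · rw [if_neg hkodd, if_neg (by omega), if_neg (by omega), sub_zero]

theorem A2_mul_Rm : A2 d * Rm d = Rp d * G2 d := by
  ext i k
  rw [A2_mul_Rm_apply, Rp_mul_G2_apply, rMinus_pairSwap]
  obtain hk | hk : (k : ℕ) + 1 < d ∨ (k : ℕ) + 1 = d := by omega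
  · rw [rMinus_eq_zero_of_lt d (show (k : ℕ) < d - 1 by omega)]
    simp [hk]
  · by_cases hkeven : (k : ℕ) % 2 = 0
    · rw [if_pos hkeven, if_pos (by omega), if_neg (by omega), show d - 1 = (k : ℕ) by omega,
        hk, rPlus_col_self d (by omega) i.isLt, rMinus_self_of_even d hkeven]
      ring
    · rw [if_neg hkeven, if_neg (by omega), if_neg (by omega), sub_zero]

end Products

theorem stmt12_general (d : ℕ) :
    A3 d * Rp d = Rm d * G1 d ∧ A2 d * Rm d = Rp d * G2 d :=
  ⟨A3_mul_Rp d, A2_mul_Rm d⟩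

/-- The jump relations `A₃ · R⁺ = R⁻ · G₁` and `A₂ · R⁻ = R⁺ · G₂`. -/
theorem stmt12 (d : ℕ) (hd : 2 ≤ d) :
    A3 d * Rp d = Rm d * G1 d ∧ A2 d * Rm d = Rp d * G2 d :=
  stmt12_general d
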